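/- For every positive integer x with orbit (x_n) under P, the finite sequence q(x₁), q(x₂), …, q(x_{S(x)}) is strictly decreasing: q(x_{n+1}) < q(x_n) for every n with 1 ≤ n < S(x). -/

import Mathlib

open scoped Classical

/-- The largest element of ℙ*₁ = ℙ* ∪ {1} (prime-powers together with 1) not exceeding `x`. -/
noncomputable def q (x : ℕ) : ℕ :=
  sSup {m : ℕ | (IsPrimePow m ∨ m = 1) ∧ m ≤ x}

/-- The prime-power map. -/
noncomputable def P (x : ℕ) : ℕ :=
  if x = 1 then 1
  else if IsPrimePow x then x / x.minFac
  else x - q x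

/-- The orbit of `x` under `P`: `orbit x 1 = x` and `orbit x (n+1) = P (orbit x n)`. -/
noncomputable def orbit (x n : ℕ) : ℕ := P^[n - 1] x

/-- The transient length `T x = min {n ≥ 1 : x_n = 1}`. -/
noncomputable def T (x : ℕ) : ℕ := sInf {n : ℕ | 1 ≤ n ∧ orbit x n = 1}

/-- The settling time `S x = min {n ≥ 1 : x_n ∈ ℙ*₁}`. -/
noncomputable def S (x : ℕ) : ℕ :=
  sInf {n : ℕ | 1 ≤ n ∧ (IsPrimePow (orbit x n) ∨ orbit x n = 1)}

/-!
If `y` is not in ℙ*₁ then `P y = y - q y`, and Bertrand's postulate gives a prime in `(y/2, y]`,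
so `q y > y / 2`. Hence `q (P y) ≤ P y = y - q y < q y`.
-/

lemma bddAbove_primePow_or_one_le (z : ℕ) :
    BddAbove {m : ℕ | (IsPrimePow m ∨ m = 1) ∧ m ≤ z} :=
  ⟨z, fun _ hm => hm.2⟩

lemma q_le_self (z : ℕ) : q z ≤ z :=
  csSup_le' fun _ hm => hm.2

lemma le_q {m z : ℕ} (hm : IsPrimePow m ∨ m = 1) (hmz : m ≤ z) : m ≤ q z :=
  le_csSup (bddAbove_primePow_or_one_le z) ⟨hm, hmz⟩

lemma q_isPrimePow_or_eq_one {z : ℕ} (hz : z ≠ 0) : IsPrimePow (q z) ∨ q z = 1 :=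
  (Nat.sSup_mem (s := {m : ℕ | (IsPrimePow m ∨ m = 1) ∧ m ≤ z}) ⟨1, Or.inr rfl, by omega⟩
    (bddAbove_primePow_or_one_le z)).1

lemma q_lt_self {z : ℕ} (hz : z ≠ 0) (h : ¬(IsPrimePow z ∨ z = 1)) : q z < z :=
  (q_le_self z).lt_of_ne fun hq => h (hq ▸ q_isPrimePow_or_eq_one hz)

lemma lt_two_mul_q {y : ℕ} (hy : y ≠ 0) : y < 2 * q y := by
  rcases Nat.lt_or_ge y 2 with hy2 | hy2
  · have : 1 ≤ q y := le_q (Or.inr rfl) (by omega)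
    omega
  · obtain ⟨p, hp, hyp, hpy⟩ := Nat.exists_prime_lt_and_le_two_mul (y / 2) (by omega)
    have : p ≤ q y := le_q (Or.inl hp.isPrimePow) (by omega)
    omega

lemma P_eq_sub_q {y : ℕ} (h : ¬(IsPrimePow y ∨ y = 1)) : P y = y - q y := by
  rw [not_or] at h
  simp only [P, if_neg h.2, if_neg h.1]

lemma P_pos {z : ℕ} (hz : 0 < z) : 0 < P z := by
  by_cases h : IsPrimePow z ∨ z = 1
  · unfold P
    split_ifs
    · exact one_pos
    · exact Nat.div_pos (Nat.minFac_le hz) (Nat.minFac_pos z)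
    · tauto
  · rw [P_eq_sub_q h]
    exact Nat.sub_pos_of_lt (q_lt_self hz.ne' h)

lemma q_P_lt_q {y : ℕ} (hy : y ≠ 0) (h : ¬(IsPrimePow y ∨ y = 1)) : q (P y) < q y :=
  calc q (P y) ≤ P y := q_le_self _
    _ = y - q y := P_eq_sub_q h
    _ < q y := by have := lt_two_mul_q hy; omega

lemma orbit_succ (x : ℕ) {n : ℕ} (hn : 1 ≤ n) : orbit x (n + 1) = P (orbit x n) := by
  obtain ⟨k, rfl⟩ := Nat.exists_eq_add_of_le' hn
  simp only [orbit, Nat.add_sub_cancel, Function.iterate_succ_apply']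

lemma orbit_pos {x : ℕ} (hx : 0 < x) (n : ℕ) : 0 < orbit x n := by
  unfold orbit
  induction n - 1 with
  | zero => exact hx
  | succ k ih => rw [Function.iterate_succ_apply']; exact P_pos ih

lemma orbit_not_isPrimePow_or_eq_one_of_lt_S {x n : ℕ} (h1 : 1 ≤ n) (h2 : n < S x) :
    ¬(IsPrimePow (orbit x n) ∨ orbit x n = 1) :=
  fun h => Nat.notMem_of_lt_sInf h2 ⟨h1, h⟩

theorem stmt_12 (x : ℕ) (hx : 0 < x) (n : ℕ) (h1 : 1 ≤ n) (h2 : n < S x) :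
    q (orbit x (n + 1)) < q (orbit x n) := by
  rw [orbit_succ x h1]
  exact q_P_lt_q (orbit_pos hx n).ne' (orbit_not_isPrimePow_or_eq_one_of_lt_S h1 h2)
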